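/- In a finite lattice, for any element α with set of lower covers α⁻, the Moebius-inverted atom satisfies f_∂^α = f_∩^α − max_{β ∈ α⁻} f_∩^β, provided f_∩ satisfies the maximum-minimums identity structure of the antichain lattice; in particular for the antichain lattice with f_∩^α(ω) = min_{a∈α} f(ω;E^a), f_∂^α(ω) = f_∩^α(ω) − max_{β ∈ α⁻} min_{b∈β} f(ω;E^b). -/

import Mathlib

attribute [local instance] Classical.propDecidable

/-- Efficiency between two vertices: reciprocal of shortest-path length, 0 if disconnected. -/
noncomputable def eff {V : Type*} (G : SimpleGraph V) (x y : V) : ℝ :=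
  if G.Reachable x y then ((G.dist x y : ℝ))⁻¹ else 0

/-- The antichain lattice over `{1,...,N}`: nonempty antichains of nonempty subsets. -/
def Antichains (N : ℕ) : Type :=
  {α : Finset (Finset (Fin N)) //
    α.Nonempty ∧ (∀ a ∈ α, a.Nonempty) ∧ IsAntichain (· ⊆ ·) (α : Set (Finset (Fin N)))}

noncomputable instance (N : ℕ) : Fintype (Antichains N) :=
  Subtype.fintype _

/-- The order on antichains: `α ⪯ β` iff every `b ∈ β` contains some `a ∈ α`. -/
def ple {N : ℕ} (α β : Antichains N) : Prop := ∀ b ∈ β.1, ∃ a ∈ α.1, a ⊆ b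

/-- Strict order on antichains. -/
def plt {N : ℕ} (α β : Antichains N) : Prop := ple α β ∧ α ≠ β

/-- `β` is a lower cover of `α`: `β ≺ α` with nothing strictly in between. -/
def CoveredBy {N : ℕ} (β α : Antichains N) : Prop :=
  plt β α ∧ ∀ γ : Antichains N, plt β γ → plt γ α → False

/-- The network redundancy function `f_∩^α(ω) = min_{a ∈ α} f(ω; E^a)`. -/
noncomputable def fcap {V : Type*} {N : ℕ} (E : Fin N → SimpleGraph V)
    (α : Antichains N) (x y : V) : ℝ :=
  α.1.inf' α.2.1 (fun a => eff (a.sup E) x y)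

/-! The Möbius relation `f_∩^β = ∑_{γ ⪯ β} f_∂^γ` together with `f_∩^{β ∧ γ} = min f_∩^β f_∩^γ`
gives, by inclusion–exclusion over principal down-sets (`↓a ∩ ↓b = ↓(a ∧ b)` and
`max u v + min u v = u + v`), that the sum of `f_∂` over the down-set of any nonempty finite `S` is
`max_{β ∈ S} f_∩^β`. In a finite poset the strict down-set of `α` is the union of the down-sets
of its lower covers, so `f_∩^α = f_∂^α + max_{β ∈ α⁻} f_∩^β`.

For antichains, `β ∧ γ` is the set of minimal elements of `β ∪ γ`; `f_∩` turns it into a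
minimum because `a ↦ f(ω; E^a)` is monotone, so dropping non-minimal elements of `β ∪ γ` does not
change the minimum over it. -/

open Finset

theorem exists_covBy_le_iff_lt {P : Type*} [PartialOrder P] [Finite P] {a c : P} :
    (∃ b, b ⋖ a ∧ c ≤ b) ↔ c < a :=
  ⟨fun ⟨_, hb, hcb⟩ => hcb.trans_lt hb.lt,
    fun hca => let ⟨b, hcb, hb⟩ := exists_le_covBy_of_lt hca; ⟨b, hb, hcb⟩⟩

section MoebiusOnMeetSemilattice

variable {P R : Type*} [SemilatticeInf P] [Fintype P] [AddCommGroup R] [LinearOrder R]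
  {f g : P → R}

theorem sum_biUnion_filter_le_eq_sup' (hg : ∀ a, g a = ∑ b ∈ univ.filter (· ≤ a), f b)
    (hinf : ∀ a b, g (a ⊓ b) = min (g a) (g b)) (S : Finset P) (hS : S.Nonempty) :
    ∑ c ∈ S.biUnion (fun b => univ.filter (· ≤ b)), f c = S.sup' hS g := by
  obtain ⟨a, ha⟩ := hS
  obtain ⟨T, haT, rfl⟩ : ∃ T, a ∉ T ∧ insert a T = S :=
    ⟨S.erase a, notMem_erase a S, insert_erase ha⟩
  rcases T.eq_empty_or_nonempty with rfl | hT
  · simp only [insert_empty, singleton_biUnion, sup'_singleton, hg a]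
  have hunion : (insert a T).biUnion (fun b => univ.filter (· ≤ b))
      = univ.filter (· ≤ a) ∪ T.biUnion (fun b => univ.filter (· ≤ b)) := biUnion_insert
  have hinter : univ.filter (· ≤ a) ∩ T.biUnion (fun b => univ.filter (· ≤ b))
      = (T.image (· ⊓ a)).biUnion (fun b => univ.filter (· ≤ b)) := by
    ext c
    simp only [mem_inter, mem_filter, mem_univ, true_and, mem_biUnion, mem_image,
      exists_exists_and_eq_and, le_inf_iff]
    exact ⟨fun ⟨h, b, hb, hcb⟩ => ⟨b, hb, hcb, h⟩, fun ⟨b, hb, hcb, h⟩ => ⟨h, b, hb, hcb⟩⟩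
  have hmin : (T.image (· ⊓ a)).sup' (hT.image _) g = min (T.sup' hT g) (g a) := by
    simp only [sup'_image, Function.comp_def, hinf, sup'_inf_distrib_right]
  have hsum := sum_union_inter (s₁ := univ.filter (· ≤ a))
    (s₂ := T.biUnion (fun b => univ.filter (· ≤ b))) (f := f)
  rw [hinter, sum_biUnion_filter_le_eq_sup' hg hinf _ (hT.image _), hmin,
    sum_biUnion_filter_le_eq_sup' hg hinf T hT, ← hg, ← hunion] at hsum
  rw [sup'_insert hT]
  exact add_right_cancel (b := min (T.sup' hT g) (g a))
    (by rw [hsum, add_comm (g a), ← min_add_max, max_comm, add_comm])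
termination_by S.card
decreasing_by
  all_goals subst_vars
  · exact card_lt_card (ssubset_insert haT)
  · exact card_image_le.trans_lt (card_lt_card (ssubset_insert haT))

theorem eq_sub_sup'_covBy (hg : ∀ a, g a = ∑ b ∈ univ.filter (· ≤ a), f b)
    (hinf : ∀ a b, g (a ⊓ b) = min (g a) (g b)) (a : P) (ha : (univ.filter (· ⋖ a)).Nonempty) :
    f a = g a - (univ.filter (· ⋖ a)).sup' ha g := by
  have hIic : univ.filter (· ≤ a) = insert a (univ.filter (· < a)) := by
    ext c; simp [le_iff_eq_or_lt]
  have hIio : univ.filter (· < a)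
      = (univ.filter (· ⋖ a)).biUnion (fun b => univ.filter (· ≤ b)) := by
    ext c; simp [exists_covBy_le_iff_lt]
  rw [eq_sub_iff_add_eq, ← sum_biUnion_filter_le_eq_sup' hg hinf _ ha, hg a, hIic,
    sum_insert (by simp), hIio]

end MoebiusOnMeetSemilattice

theorem Finset.inf'_filter_minimal_eq_inf' {ι α : Type*} [Preorder ι] [LinearOrder α]
    {φ : ι → α} (hφ : Monotone φ) {s : Finset ι} (hs : s.Nonempty)
    (hs' : (s.filter (Minimal (· ∈ s))).Nonempty) :
    (s.filter (Minimal (· ∈ s))).inf' hs' φ = s.inf' hs φ := by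
  refine le_antisymm (le_inf' _ _ fun b hb => ?_) (inf'_mono _ (filter_subset _ _) hs')
  obtain ⟨a, hab, ha⟩ := s.finite_toSet.exists_le_minimal hb
  exact inf'_le_of_le _ (mem_filter.2 ⟨ha.prop, ha⟩) (hφ hab)

theorem eff_mono {V : Type*} {G H : SimpleGraph V} (h : G ≤ H) (x y : V) :
    eff G x y ≤ eff H x y := by
  unfold eff
  by_cases hG : G.Reachable x y
  · rw [if_pos hG, if_pos (hG.mono h)]
    rcases eq_or_ne x y with rfl | hxy
    · simp
    exact inv_anti₀ (by exact_mod_cast (hG.mono h).pos_dist_of_ne hxy)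
      (by exact_mod_cast hG.dist_anti h)
  · rw [if_neg hG]
    split_ifs <;> positivity

namespace Antichains

variable {N : ℕ}

theorem val_subset_of_ple_of_ple {α β : Antichains N} (hαβ : ple α β) (hβα : ple β α) :
    β.1 ⊆ α.1 := by
  intro b hb
  obtain ⟨a, ha, hab⟩ := hαβ b hb
  obtain ⟨b', hb', hb'a⟩ := hβα a ha
  obtain rfl : b' = b := β.2.2.2.eq hb' hb (hb'a.trans hab)
  rwa [subset_antisymm hab hb'a] at ha

instance : PartialOrder (Antichains N) where
  le := ple
  le_refl _ b hb := ⟨b, hb, subset_rfl⟩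
  le_trans _ _ _ hαβ hβγ c hc :=
    let ⟨b, hb, hbc⟩ := hβγ c hc
    let ⟨a, ha, hab⟩ := hαβ b hb
    ⟨a, ha, hab.trans hbc⟩
  le_antisymm _ _ hαβ hβα :=
    Subtype.ext (subset_antisymm (val_subset_of_ple_of_ple hβα hαβ)
      (val_subset_of_ple_of_ple hαβ hβα))

theorem coveredBy_iff_covBy {α β : Antichains N} : CoveredBy β α ↔ β ⋖ α := by
  have hlt (γ δ : Antichains N) : plt γ δ ↔ γ < δ := (lt_iff_le_and_ne (a := γ) (b := δ)).symm
  simp only [CoveredBy, CovBy, hlt]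

theorem exists_minimal_subset {s : Finset (Finset (Fin N))} {b : Finset (Fin N)} (hb : b ∈ s) :
    ∃ a ⊆ b, Minimal (· ∈ s) a :=
  exists_minimal_le_of_wellFoundedLT _ b hb

noncomputable def meet (β γ : Antichains N) : Antichains N :=
  ⟨(β.1 ∪ γ.1).filter (Minimal (· ∈ β.1 ∪ γ.1)),
    by
      obtain ⟨b, hb⟩ := β.2.1
      obtain ⟨a, -, ha⟩ := exists_minimal_subset (mem_union_left γ.1 hb)
      exact ⟨a, mem_filter.2 ⟨ha.prop, ha⟩⟩,
    fun a ha => (mem_union.1 (mem_filter.1 ha).1).elim (β.2.2.1 a) (γ.2.2.1 a),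
    (setOfPred_minimal_antichain _).subset fun _ ha => (mem_filter.1 ha).2⟩

theorem exists_mem_meet_subset {β γ : Antichains N} {b : Finset (Fin N)} (hb : b ∈ β.1 ∪ γ.1) :
    ∃ a ∈ (meet β γ).1, a ⊆ b :=
  let ⟨a, hab, ha⟩ := exists_minimal_subset hb
  ⟨a, mem_filter.2 ⟨ha.prop, ha⟩, hab⟩

noncomputable instance : SemilatticeInf (Antichains N) where
  inf := meet
  inf_le_left _ _ _ hb := exists_mem_meet_subset (mem_union_left _ hb)
  inf_le_right _ _ _ hb := exists_mem_meet_subset (mem_union_right _ hb)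
  le_inf _ _ _ hβ hγ a ha := (mem_union.1 (mem_filter.1 ha).1).elim (hβ a) (hγ a)

theorem fcap_inf {V : Type*} (E : Fin N → SimpleGraph V) (x y : V) (β γ : Antichains N) :
    fcap E (β ⊓ γ) x y = min (fcap E β x y) (fcap E γ x y) :=
  (inf'_filter_minimal_eq_inf' (fun _ _ hab => eff_mono (sup_mono hab) x y)
    (β.2.1.mono subset_union_left) _).trans (inf'_union β.2.1 γ.2.1 _)

end Antichains

open Finset in
theorem fpartial_eq_fcap_sub_max_general {V : Type*} {N : ℕ}
    (E : Fin N → SimpleGraph V) (x y : V) (fpartial : Antichains N → ℝ)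
    (hmoebius : ∀ α : Antichains N,
      fcap E α x y = ∑ β ∈ univ.filter (fun β => ple β α), fpartial β)
    (α : Antichains N)
    (hcov : (univ.filter (fun β : Antichains N => CoveredBy β α)).Nonempty) :
    fpartial α = fcap E α x y -
      (univ.filter (fun β : Antichains N => CoveredBy β α)).sup' hcov
        (fun β => β.1.inf' β.2.1 (fun b => eff (b.sup E) x y)) := by
  have hcovers : univ.filter (fun β => CoveredBy β α) = univ.filter (· ⋖ α) :=
    filter_congr fun _ _ => Antichains.coveredBy_iff_covBy
  rw [eq_sub_sup'_covBy (g := fun β => fcap E β x y) hmoebius (Antichains.fcap_inf E x y) α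
    (hcovers ▸ hcov)]
  exact congrArg _ (sup'_congr _ hcovers.symm fun _ _ => rfl)

open Finset in
/-- On the antichain lattice with `f_∩^α(ω) = min_{a∈α} f(ω;E^a)`, the Moebius-inverted
atom satisfies `f_∂^α(ω) = f_∩^α(ω) − max_{β ∈ α⁻} f_∩^β(ω)
= f_∩^α(ω) − max_{β ∈ α⁻} min_{b ∈ β} f(ω;E^b)`, where `α⁻` is the (nonempty) set of
lower covers of `α`. -/
theorem fpartial_eq_fcap_sub_max {V : Type*} [Fintype V] {N : ℕ}
    (E : Fin N → SimpleGraph V) (x y : V) (fpartial : Antichains N → ℝ)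
    (hmoebius : ∀ α : Antichains N,
      fcap E α x y = ∑ β ∈ univ.filter (fun β => ple β α), fpartial β)
    (α : Antichains N)
    (hcov : (univ.filter (fun β : Antichains N => CoveredBy β α)).Nonempty) :
    fpartial α = fcap E α x y -
      (univ.filter (fun β : Antichains N => CoveredBy β α)).sup' hcov
        (fun β => β.1.inf' β.2.1 (fun b => eff (b.sup E) x y)) :=
  fpartial_eq_fcap_sub_max_general E x y fpartial hmoebius α hcov
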